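/- Consider the two-type screening problem with Θ = X = {0, 1}, types uniformly distributed, u(x, θ) = θx, and v(x, θ) = κ(1/2 − θ)x for a constant κ > 2. The mechanism x(0) = 1, t(0) = 0, x(1) = 0, t(1) = −1 is an optimal solution of the downward-IC program, and it violates the upward constraint IC[0→1]; moreover, no optimal solution of the downward-IC program satisfies all IC constraints. -/

import Mathlib

noncomputable section

/-- Agent utility `u(x, θ) = θ x`. -/
def uEx (x θ : ℝ) : ℝ := θ * x

/-- Principal utility `v(x, θ) = κ (1/2 − θ) x`. -/
def vEx (κ x θ : ℝ) : ℝ := κ * (1 / 2 - θ) * x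

/-- Feasibility for the downward-IC program of the two-type example: allocations in
`{0, 1}`, the downward constraint IC[1→0], and both IR constraints. -/
def DFeasEx (x0 x1 t0 t1 : ℝ) : Prop :=
  x0 ∈ ({0, 1} : Set ℝ) ∧ x1 ∈ ({0, 1} : Set ℝ) ∧
    uEx x1 1 - t1 ≥ uEx x0 1 - t0 ∧
    uEx x0 0 - t0 ≥ 0 ∧ uEx x1 1 - t1 ≥ 0

/-- The principal's objective in the two-type example. -/
def ObjEx (κ x0 x1 t0 t1 : ℝ) : ℝ :=
  (1 / 2) * (vEx κ x0 0 + t0) + (1 / 2) * (vEx κ x1 1 + t1)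

/-! IC[1→0] gives `t1 ≤ t0 + x1 - x0` and IR[0] gives `t0 ≤ 0`, so `t0 + t1 ≤ x1 - x0` and the
objective `(κ (x0 - x1) / 2 + t0 + t1) / 2` is at most `(κ - 2)(x0 - x1) / 4`; the proposed
mechanism attains this with `x0 - x1 = 1`. Adding IC[0→1] forces `x0 ≤ x1`, so the objective drops
to at most `0`, strictly below the optimum `(κ - 2) / 4` since `κ > 2`. -/

lemma objEx_le_of_ic_of_ir (κ : ℝ) {x0 x1 t0 t1 : ℝ} (hic : uEx x1 1 - t1 ≥ uEx x0 1 - t0)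
    (hir : uEx x0 0 - t0 ≥ 0) : ObjEx κ x0 x1 t0 t1 ≤ (κ - 2) * (x0 - x1) / 4 := by
  simp only [ObjEx, vEx, uEx] at *
  linear_combination hic / 2 + hir

lemma le_one_of_mem_zero_one {x : ℝ} (hx : x ∈ ({0, 1} : Set ℝ)) : x ≤ 1 := by
  rcases hx with rfl | rfl <;> norm_num

lemma nonneg_of_mem_zero_one {x : ℝ} (hx : x ∈ ({0, 1} : Set ℝ)) : 0 ≤ x := by
  rcases hx with rfl | rfl <;> norm_num

lemma objEx_le_of_dFeasEx {κ x0 x1 t0 t1 : ℝ} (hκ : 2 ≤ κ) (h : DFeasEx x0 x1 t0 t1) :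
    ObjEx κ x0 x1 t0 t1 ≤ (κ - 2) / 4 := by
  obtain ⟨hx0, hx1, hic, hir, -⟩ := h
  have hgap : x0 - x1 ≤ 1 := by
    linarith [le_one_of_mem_zero_one hx0, nonneg_of_mem_zero_one hx1]
  calc ObjEx κ x0 x1 t0 t1 ≤ (κ - 2) * (x0 - x1) / 4 := objEx_le_of_ic_of_ir κ hic hir
    _ ≤ (κ - 2) * 1 / 4 := by gcongr
    _ = (κ - 2) / 4 := by ring

lemma objEx_one_zero_zero_neg_one (κ : ℝ) : ObjEx κ 1 0 0 (-1) = (κ - 2) / 4 := by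
  simp only [ObjEx, vEx]
  ring

lemma le_of_ic_up_of_ic_down {x0 x1 t0 t1 : ℝ} (hic01 : uEx x0 0 - t0 ≥ uEx x1 0 - t1)
    (hic10 : uEx x1 1 - t1 ≥ uEx x0 1 - t0) : x0 ≤ x1 := by
  simp only [uEx] at *
  linarith

theorem stmt18 (κ : ℝ) (hκ : 2 < κ) :
    DFeasEx 1 0 0 (-1) ∧
    (∀ x0 x1 t0 t1 : ℝ, DFeasEx x0 x1 t0 t1 →
      ObjEx κ x0 x1 t0 t1 ≤ ObjEx κ 1 0 0 (-1)) ∧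
    ¬ (uEx 1 0 - 0 ≥ uEx 0 0 - (-1)) ∧
    (∀ x0 x1 t0 t1 : ℝ, DFeasEx x0 x1 t0 t1 →
      (∀ x0' x1' t0' t1' : ℝ, DFeasEx x0' x1' t0' t1' →
        ObjEx κ x0' x1' t0' t1' ≤ ObjEx κ x0 x1 t0 t1) →
      ¬ (uEx x0 0 - t0 ≥ uEx x1 0 - t1 ∧ uEx x1 1 - t1 ≥ uEx x0 1 - t0)) := by
  have hfeas : DFeasEx 1 0 0 (-1) := by norm_num [DFeasEx, uEx]
  refine ⟨hfeas, fun x0 x1 t0 t1 h => ?_, by norm_num [uEx], ?_⟩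
  · exact objEx_one_zero_zero_neg_one κ ▸ objEx_le_of_dFeasEx hκ.le h
  · rintro x0 x1 t0 t1 ⟨-, -, hic, hir, -⟩ hmax ⟨hic01, hic10⟩
    have hmono : x0 ≤ x1 := le_of_ic_up_of_ic_down hic01 hic10
    have hprod : (κ - 2) * (x0 - x1) ≤ 0 :=
      mul_nonpos_of_nonneg_of_nonpos (by linarith) (sub_nonpos.2 hmono)
    have hle := objEx_le_of_ic_of_ir κ hic hir
    have hge := objEx_one_zero_zero_neg_one κ ▸ hmax 1 0 0 (-1) hfeas
    linarith
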